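/- arXiv:2503.17308 — 2 statements merged into one kernel-verified Lean document; each statement's English description precedes it below -/
import Mathlib

section
/- Let D ≥ 1 and let (x_1,y_1),…,(x_N,y_N) be a dataset in ℝ^D with ‖x_i‖ = 1 and y_i ∈ {+1,−1}. Suppose there is a unit vector u and a real γ with 0 < γ ≤ 1 such that y_i⟨u,x_i⟩ ≥ γ for all i ∈ [N]. Then every nonzero vector w ∈ ℝ^D whose angle with u satisfies ∠(w,u) < arcsin γ lies in the version space, i.e. y_i⟨w,x_i⟩ > 0 for all i ∈ [N]. -/
open scoped RealInnerProductSpace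

set_option maxHeartbeats 1000000 in
/-- If a unit vector `u` separates the normalized dataset with margin `γ`,
then any nonzero `w` with angle to `u` less than `arcsin γ` lies in the version space. -/
theorem stmt_0 (D N : ℕ) (hD : 1 ≤ D)
    (x : Fin N → EuclideanSpace ℝ (Fin D)) (y : Fin N → ℝ)
    (hx : ∀ i, ‖x i‖ = 1) (hy : ∀ i, y i = 1 ∨ y i = -1)
    (u : EuclideanSpace ℝ (Fin D)) (hu : ‖u‖ = 1)
    (γ : ℝ) (hγ0 : 0 < γ) (hγ1 : γ ≤ 1)
    (hmargin : ∀ i, γ ≤ y i * ⟪u, x i⟫)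
    (w : EuclideanSpace ℝ (Fin D)) (hw : w ≠ 0)
    (hang : InnerProductGeometry.angle w u < Real.arcsin γ) :
    ∀ i, 0 < y i * ⟪w, x i⟫ := by
  intro i
  set θ := InnerProductGeometry.angle w u with hθdef
  have hn : (0:ℝ) < ‖w‖ := norm_pos_iff.mpr hw
  have hθ0 : 0 ≤ θ := InnerProductGeometry.angle_nonneg w u
  have hθpi : θ ≤ Real.pi := InnerProductGeometry.angle_le_pi w u
  have harc2 : Real.arcsin γ ≤ Real.pi / 2 := Real.arcsin_le_pi_div_two γ
  have hθhalf : θ < Real.pi / 2 := lt_of_lt_of_le hang harc2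
  -- cos θ > √(1 - γ²)
  have hcosgt : Real.sqrt (1 - γ ^ 2) < Real.cos θ := by
    have h := Real.cos_lt_cos_of_nonneg_of_le_pi hθ0
      (le_trans harc2 (by linarith [Real.pi_pos])) hang
    rwa [Real.cos_arcsin] at h
  have hcospos : 0 < Real.cos θ :=
    lt_of_le_of_lt (Real.sqrt_nonneg _) hcosgt
  -- sin θ < γ, sin θ ≥ 0
  have hsinnn : 0 ≤ Real.sin θ := Real.sin_nonneg_of_nonneg_of_le_pi hθ0 hθpi
  have hsinlt : Real.sin θ < γ := by
    have h := Real.strictMonoOn_sin ⟨by linarith [Real.pi_pos], hθhalf.le⟩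
      ⟨le_trans (by linarith [Real.pi_pos]) (Real.neg_pi_div_two_le_arcsin γ), harc2⟩ hang
    rwa [Real.sin_arcsin (by linarith) hγ1] at h
  -- inner products
  have huu : ⟪u, u⟫ = 1 := by
    rw [real_inner_self_eq_norm_mul_norm, hu]; norm_num
  set c := ⟪w, u⟫ with hcdef
  set t := ⟪u, x i⟫ with htdef
  have hwu : ⟪u, w⟫ = c := by rw [hcdef, real_inner_comm]
  have hxu : ⟪x i, u⟫ = t := by rw [htdef, real_inner_comm]
  have hc : c = ‖w‖ * Real.cos θ := by
    have := InnerProductGeometry.cos_angle_mul_norm_mul_norm w u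
    rw [hu, mul_one] at this
    rw [hcdef, ← this, ← hθdef]; ring
  have ha : γ ≤ y i * t := hmargin i
  have hy2 : y i ^ 2 = 1 := by rcases hy i with h | h <;> rw [h] <;> norm_num
  have hyabs : |y i| = 1 := by rcases hy i with h | h <;> rw [h] <;> norm_num
  have hat : (y i * t) ^ 2 = t ^ 2 := by rw [mul_pow, hy2, one_mul]
  -- norms of the orthogonal components
  have hwuw : ⟪w, w⟫ = ‖w‖ ^ 2 := real_inner_self_eq_norm_sq w
  have hxx : ⟪x i, x i⟫ = 1 := by
    rw [real_inner_self_eq_norm_mul_norm, hx i]; norm_num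
  have hnorm1 : ‖w - c • u‖ = ‖w‖ * Real.sin θ := by
    have hs2 : Real.sin θ ^ 2 = 1 - Real.cos θ ^ 2 := by
      have := Real.sin_sq_add_cos_sq θ; linarith
    have hsq : ‖w - c • u‖ ^ 2 = (‖w‖ * Real.sin θ) ^ 2 := by
      rw [← real_inner_self_eq_norm_sq]
      simp only [inner_sub_left, inner_sub_right, real_inner_smul_left,
        real_inner_smul_right, huu, hwu, hwuw, ← hcdef]
      rw [hc]; linear_combination (-1 : ℝ) * ‖w‖ ^ 2 * hs2
    have h1 : 0 ≤ ‖w - c • u‖ := norm_nonneg _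
    have h2 : 0 ≤ ‖w‖ * Real.sin θ := mul_nonneg hn.le hsinnn
    nlinarith [hsq, h1, h2]
  have hnorm2 : ‖x i - t • u‖ = Real.sqrt (1 - t ^ 2) := by
    have hsq : ‖x i - t • u‖ ^ 2 = 1 - t ^ 2 := by
      rw [← real_inner_self_eq_norm_sq]
      simp only [inner_sub_left, inner_sub_right, real_inner_smul_left,
        real_inner_smul_right, huu, hxu, hxx, ← htdef]
      ring
    rw [← hsq, Real.sqrt_sq (norm_nonneg _)]
  -- decomposition
  have hdecomp : ⟪w, x i⟫ = c * t + ⟪w - c • u, x i - t • u⟫ := by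
    simp only [inner_sub_left, inner_sub_right, real_inner_smul_left,
      real_inner_smul_right, huu, hwu, hxu, ← htdef, ← hcdef]
    ring
  -- Cauchy-Schwarz bound
  have hcs : |⟪w - c • u, x i - t • u⟫| ≤ ‖w‖ * Real.sin θ * Real.sqrt (1 - t ^ 2) := by
    have := abs_real_inner_le_norm (w - c • u) (x i - t • u)
    rwa [hnorm1, hnorm2] at this
  -- key inequality
  clear_value θ c t
  have hsqle : Real.sqrt (1 - t ^ 2) ≤ Real.sqrt (1 - γ ^ 2) := by
    apply Real.sqrt_le_sqrt
    have h2 : γ ^ 2 ≤ t ^ 2 := by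
      rw [← hat]; exact pow_le_pow_left₀ hγ0.le ha 2
    linarith
  have hkey : Real.sqrt (1 - t ^ 2) * Real.sin θ < Real.cos θ * (y i * t) :=
    mul_lt_mul'' (lt_of_le_of_lt hsqle hcosgt)
      (lt_of_lt_of_le hsinlt ha) (Real.sqrt_nonneg _) hsinnn
  -- combine
  set E := ⟪w - c • u, x i - t • u⟫ with hEdef
  clear_value E
  have hyE : -(‖w‖ * Real.sin θ * Real.sqrt (1 - t ^ 2)) ≤ y i * E := by
    have h1 : |y i * E| ≤ ‖w‖ * Real.sin θ * Real.sqrt (1 - t ^ 2) := by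
      rw [abs_mul, hyabs, one_mul]; exact hcs
    linarith [neg_abs_le (y i * E)]
  have hsplit : y i * ⟪w, x i⟫ = ‖w‖ * Real.cos θ * (y i * t) + y i * E := by
    rw [hdecomp, hc]; ring
  have hpos : 0 < ‖w‖ * (Real.cos θ * (y i * t) - Real.sin θ * Real.sqrt (1 - t ^ 2)) := by
    apply mul_pos hn
    linarith [hkey]
  nlinarith [hsplit, hyE, hpos]
end

section
/- Let D ≥ 2 be an integer and let 0 < γ ≤ 1. Then the regularized incomplete beta value satisfies (1/2)·I_{γ²}((D−1)/2, 1/2) ≥ γ^{D−1}/(π(D−1)). -/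
/-- The regularized incomplete beta function
`I_x(a,b) = (∫_0^x t^(a-1) (1-t)^(b-1) dt) * Γ(a+b) / (Γ(a) Γ(b))`. -/
noncomputable def regIncompleteBeta (x a b : ℝ) : ℝ :=
  (∫ t in (0:ℝ)..x, t ^ (a - 1) * (1 - t) ^ (b - 1)) *
    (Real.Gamma (a + b) / (Real.Gamma a * Real.Gamma b))

lemma gamma_half_le (n : ℕ) :
    Real.Gamma (((n : ℝ) + 1) / 2) ≤
      Real.sqrt Real.pi * Real.Gamma (((n : ℝ) + 1) / 2 + 1 / 2) := by
  induction n using Nat.twoStepInduction with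
  | zero =>
      norm_num [Real.Gamma_one_half_eq, Real.Gamma_one]
  | one =>
      have h32 : Real.Gamma (3 / 2) = Real.sqrt Real.pi / 2 := by
        have : (3 / 2 : ℝ) = 1 / 2 + 1 := by norm_num
        rw [this, Real.Gamma_add_one (by norm_num), Real.Gamma_one_half_eq]
        ring
      have hsq : Real.sqrt Real.pi * Real.sqrt Real.pi = Real.pi :=
        Real.mul_self_sqrt Real.pi_nonneg
      have h2pi : (2 : ℝ) ≤ Real.pi := Real.two_le_pi
      push_cast
      norm_num [Real.Gamma_one, h32]
      nlinarith [hsq, h2pi]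
  | more n ih _ =>
      have ha : (0 : ℝ) < ((n : ℝ) + 1) / 2 := by positivity
      have e1 : (((n : ℕ) + 2 : ℕ) : ℝ) + 1 = (n : ℝ) + 3 := by push_cast; ring
      have e2 : ((n : ℝ) + 3) / 2 = ((n : ℝ) + 1) / 2 + 1 := by ring
      have e3 : ((n : ℝ) + 3) / 2 + 1 / 2 = (((n : ℝ) + 1) / 2 + 1 / 2) + 1 := by ring
      push_cast
      rw [show ((n : ℝ) + 2 + 1) / 2 = ((n : ℝ) + 1) / 2 + 1 by ring,
        show ((n : ℝ) + 1) / 2 + 1 + 1 / 2 = (((n : ℝ) + 1) / 2 + 1 / 2) + 1 by ring,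
        Real.Gamma_add_one (ne_of_gt ha), Real.Gamma_add_one (by positivity)]
      have hG2 : (0 : ℝ) ≤ Real.Gamma (((n : ℝ) + 1) / 2 + 1 / 2) :=
        (Real.Gamma_pos_of_pos (by positivity)).le
      have hG1 : (0 : ℝ) ≤ Real.Gamma (((n : ℝ) + 1) / 2) :=
        (Real.Gamma_pos_of_pos ha).le
      calc ((n : ℝ) + 1) / 2 * Real.Gamma (((n : ℝ) + 1) / 2)
          ≤ ((n : ℝ) + 1) / 2 * (Real.sqrt Real.pi * Real.Gamma (((n : ℝ) + 1) / 2 + 1 / 2)) := by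
            apply mul_le_mul_of_nonneg_left ih (by positivity)
        _ ≤ Real.sqrt Real.pi * ((((n : ℝ) + 1) / 2 + 1 / 2) * Real.Gamma (((n : ℝ) + 1) / 2 + 1 / 2)) := by
            have hs : (0 : ℝ) ≤ Real.sqrt Real.pi := Real.sqrt_nonneg _
            nlinarith

/-- for `D ≥ 2` and `0 < γ ≤ 1`,
`(1/2) I_{γ²}((D-1)/2, 1/2) ≥ γ^(D-1) / (π (D-1))`. -/
theorem stmt_12 (D : ℕ) (hD : 2 ≤ D) (γ : ℝ) (hγ0 : 0 < γ) (hγ1 : γ ≤ 1) :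
    γ ^ (D - 1) / (Real.pi * ((D : ℝ) - 1)) ≤
      (1 / 2) * regIncompleteBeta (γ ^ 2) (((D : ℝ) - 1) / 2) (1 / 2) := by
  have hD2 : (2 : ℝ) ≤ (D : ℝ) := by exact_mod_cast hD
  set a : ℝ := ((D : ℝ) - 1) / 2 with ha_def
  have ha : (0 : ℝ) < a := by rw [ha_def]; linarith
  have hγsq : (0 : ℝ) < γ ^ 2 := by positivity
  have hγsq1 : γ ^ 2 ≤ 1 := by nlinarith
  -- integrability of the beta integrand on [0, γ²]
  have hβ : IntervalIntegrable
      (fun x : ℝ => (x : ℂ) ^ ((a : ℂ) - 1) * (1 - (x : ℂ)) ^ ((1 / 2 : ℂ) - 1))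
      MeasureTheory.volume 0 1 :=
    Complex.betaIntegral_convergent (by simpa using ha) (by norm_num)
  have hre : MeasureTheory.IntegrableOn
      (fun x : ℝ => x ^ (a - 1) * (1 - x) ^ ((1 / 2 : ℝ) - 1)) (Set.Ioc 0 1) := by
    have h1 := (intervalIntegrable_iff_integrableOn_Ioc_of_le zero_le_one).mp hβ
    have h2 := h1.re
    refine (MeasureTheory.IntegrableOn.congr_fun h2 ?_ measurableSet_Ioc)
    intro x hx
    have hx0 : (0 : ℝ) ≤ x := hx.1.le
    have hx1 : (0 : ℝ) ≤ 1 - x := by linarith [hx.2]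
    simp only
    rw [show ((a : ℂ) - 1) = (((a - 1 : ℝ) : ℂ)) by push_cast; ring,
      show ((1 / 2 : ℂ) - 1) = (((1 / 2 - 1 : ℝ) : ℂ)) by push_cast; ring,
      show (1 - (x : ℂ)) = (((1 - x : ℝ) : ℂ)) by push_cast; ring,
      ← Complex.ofReal_cpow hx0, ← Complex.ofReal_cpow hx1, ← Complex.ofReal_mul]
    simp
  have hf : IntervalIntegrable
      (fun t : ℝ => t ^ (a - 1) * (1 - t) ^ ((1 / 2 : ℝ) - 1))
      MeasureTheory.volume 0 (γ ^ 2) := by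
    rw [intervalIntegrable_iff_integrableOn_Ioc_of_le hγsq.le]
    exact hre.mono_set (Set.Ioc_subset_Ioc le_rfl hγsq1)
  have hg : IntervalIntegrable (fun t : ℝ => t ^ (a - 1))
      MeasureTheory.volume 0 (γ ^ 2) :=
    intervalIntegral.intervalIntegrable_rpow' (by linarith)
  -- pointwise a.e. bound
  have hne : ∀ᵐ x : ℝ ∂MeasureTheory.volume, x ≠ 1 := by
    rw [MeasureTheory.ae_iff]
    simp only [not_not, Set.setOf_eq_eq_singleton]
    exact Real.volume_singleton
  have hmono : (fun t : ℝ => t ^ (a - 1)) ≤ᵐ[MeasureTheory.volume.restrict (Set.Icc 0 (γ ^ 2))]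
      fun t : ℝ => t ^ (a - 1) * (1 - t) ^ ((1 / 2 : ℝ) - 1) := by
    filter_upwards [MeasureTheory.ae_restrict_mem measurableSet_Icc,
      MeasureTheory.ae_restrict_of_ae hne] with x hx hx1
    have hx0 : (0 : ℝ) ≤ x := hx.1
    have hxlt : x < 1 := lt_of_le_of_ne (le_trans hx.2 hγsq1) hx1
    have h1x : (0 : ℝ) < 1 - x := by linarith
    have hge : (1 : ℝ) ≤ (1 - x) ^ ((1 / 2 : ℝ) - 1) :=
      Real.one_le_rpow_of_pos_of_le_one_of_nonpos h1x (by linarith) (by norm_num)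
    have hxa : (0 : ℝ) ≤ x ^ (a - 1) := Real.rpow_nonneg hx0 _
    calc x ^ (a - 1) = x ^ (a - 1) * 1 := by ring
      _ ≤ x ^ (a - 1) * (1 - x) ^ ((1 / 2 : ℝ) - 1) :=
          mul_le_mul_of_nonneg_left hge hxa
  have hIle : (∫ t in (0:ℝ)..(γ ^ 2), t ^ (a - 1)) ≤
      ∫ t in (0:ℝ)..(γ ^ 2), t ^ (a - 1) * (1 - t) ^ ((1 / 2 : ℝ) - 1) :=
    intervalIntegral.integral_mono_ae_restrict hγsq.le hg hf hmono
  -- value of the lower integral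
  have hval : (∫ t in (0:ℝ)..(γ ^ 2), t ^ (a - 1)) = γ ^ (D - 1) / a := by
    rw [integral_rpow (Or.inl (by linarith : (-1 : ℝ) < a - 1))]
    have h0 : (0 : ℝ) ^ (a - 1 + 1) = 0 := by
      rw [sub_add_cancel]; exact Real.zero_rpow (ne_of_gt ha)
    rw [h0, sub_add_cancel]
    have hpow : ((γ : ℝ) ^ 2) ^ a = γ ^ (D - 1) := by
      rw [← Real.rpow_natCast γ 2, ← Real.rpow_mul hγ0.le, ← Real.rpow_natCast γ (D - 1)]
      congr 1
      rw [Nat.cast_sub (by omega : 1 ≤ D), Nat.cast_one, ha_def]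
      push_cast
      ring
    rw [hpow]
    ring
  -- Gamma inequality
  have key : Real.Gamma a ≤ Real.sqrt Real.pi * Real.Gamma (a + 1 / 2) := by
    have := gamma_half_le (D - 2)
    have hc : (((D - 2 : ℕ) : ℝ) + 1) / 2 = a := by
      rw [Nat.cast_sub (by omega : 2 ≤ D), ha_def]
      push_cast
      ring
    rwa [hc] at this
  have hG1 : (0 : ℝ) < Real.Gamma a := Real.Gamma_pos_of_pos ha
  have hG2 : (0 : ℝ) < Real.Gamma (a + 1 / 2) := Real.Gamma_pos_of_pos (by linarith)
  have hs : (0 : ℝ) < Real.sqrt Real.pi := Real.sqrt_pos.mpr Real.pi_pos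
  have hss : Real.sqrt Real.pi * Real.sqrt Real.pi = Real.pi :=
    Real.mul_self_sqrt Real.pi_nonneg
  have hC : 1 / Real.pi ≤
      Real.Gamma (a + 1 / 2) / (Real.Gamma a * Real.Gamma (1 / 2)) := by
    rw [Real.Gamma_one_half_eq, div_le_div_iff₀ Real.pi_pos (by positivity), one_mul]
    nlinarith [mul_le_mul_of_nonneg_left key hs.le]
  -- put it together
  have hX : (0 : ℝ) < γ ^ (D - 1) := by positivity
  have hCpos : (0 : ℝ) < Real.Gamma (a + 1 / 2) / (Real.Gamma a * Real.Gamma (1 / 2)) := by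
    have := Real.Gamma_one_half_eq
    positivity
  rw [regIncompleteBeta, ← mul_assoc]
  have hd1 : (D : ℝ) - 1 ≠ 0 := by linarith
  calc γ ^ (D - 1) / (Real.pi * ((D : ℝ) - 1))
      = (1 / 2) * (γ ^ (D - 1) / a) * (1 / Real.pi) := by
        rw [ha_def]
        field_simp
    _ ≤ (1 / 2) * (γ ^ (D - 1) / a) *
        (Real.Gamma (a + 1 / 2) / (Real.Gamma a * Real.Gamma (1 / 2))) :=
        mul_le_mul_of_nonneg_left hC (by positivity)
    _ ≤ (1 / 2) * (∫ t in (0:ℝ)..(γ ^ 2), t ^ (a - 1) * (1 - t) ^ ((1 / 2 : ℝ) - 1)) *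
        (Real.Gamma (a + 1 / 2) / (Real.Gamma a * Real.Gamma (1 / 2))) := by
        have h1 : γ ^ (D - 1) / a ≤
            ∫ t in (0:ℝ)..(γ ^ 2), t ^ (a - 1) * (1 - t) ^ ((1 / 2 : ℝ) - 1) := by
          rw [← hval]; exact hIle
        exact mul_le_mul_of_nonneg_right
          (mul_le_mul_of_nonneg_left h1 (by norm_num : (0:ℝ) ≤ 1/2)) hCpos.le
end
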